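/- arXiv:2004.10443 — 6 statements merged into one kernel-verified Lean document; each statement's English description precedes it below -/
import Mathlib

section
/- Let A be a μ×ν block matrix whose (α,β) block is A_{αβ} x_{αβ}, where A_{αβ} is a 2×2 matrix over a field F and the x_{αβ} are distinct indeterminates, so A is a 2μ×2ν matrix over the rational function field F(x). Suppose for each α ∈ [μ] there is a subspace X_α ⊆ F² and for each β ∈ [ν] a subspace Y_β ⊆ F² such that xᵀ A_{αβ} y = 0 for all x ∈ X_α, y ∈ Y_β, for every α, β. Then rank A ≤ 2μ + 2ν − Σ_α dim X_α − Σ_β dim Y_β. -/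
open Matrix

/-- The `(2 × 2)`-type generic partitioned matrix with blocks `A_{αβ} x_{αβ}`,
restricted to blocks in `J` (blocks outside `J` are zeroed), viewed as a
`2μ × 2ν` matrix over the rational function field `F(x)`. -/
noncomputable def genPartMat {F : Type*} [Field F] {μ ν : ℕ}
    (A : Fin μ → Fin ν → Matrix (Fin 2) (Fin 2) F) (J : Finset (Fin μ × Fin ν)) :
    Matrix (Fin μ × Fin 2) (Fin ν × Fin 2)
      (FractionRing (MvPolynomial (Fin μ × Fin ν) F)) :=
  Matrix.of fun p q =>
    if (p.1, q.1) ∈ J then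
      algebraMap (MvPolynomial (Fin μ × Fin ν) F) _
        (MvPolynomial.C (A p.1 q.1 p.2 q.2) * MvPolynomial.X (p.1, q.1))
    else 0

open Module

/-- Rank of a sum of matrices is at most the sum of ranks. -/
lemma matrix_rank_add_le' {K : Type*} [Field K] {m n : Type*} [Fintype m] [Fintype n]
    (M N : Matrix m n K) : (M + N).rank ≤ M.rank + N.rank := by
  classical
  rw [Matrix.rank, Matrix.rank, Matrix.rank, Matrix.mulVecLin_add]
  have h : LinearMap.range (M.mulVecLin + N.mulVecLin) ≤
      LinearMap.range M.mulVecLin ⊔ LinearMap.range N.mulVecLin := by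
    rintro x ⟨v, rfl⟩
    exact Submodule.add_mem_sup ⟨v, rfl⟩ ⟨v, rfl⟩
  exact (Submodule.finrank_mono h).trans
    (Submodule.finrank_add_le_finrank_add_finrank _ _)

/-- Any subspace of `F²` admits an invertible matrix whose first `dim X` rows lie in `X`. -/
lemma exists_isUnit_rows_mem {F : Type*} [Field F] (X : Submodule F (Fin 2 → F)) :
    ∃ M : Matrix (Fin 2) (Fin 2) F, IsUnit M ∧
      ∀ i : Fin 2, (i : ℕ) < finrank F X → M i ∈ X := by
  obtain ⟨W, hW⟩ := Submodule.exists_isCompl X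
  have hd : finrank F X + finrank F W = 2 := by
    rw [Submodule.finrank_add_eq_of_isCompl hW]
    simp
  let bX := finBasis F X
  let bW := finBasis F W
  let e : (Fin (finrank F X) ⊕ Fin (finrank F W)) ≃ Fin 2 :=
    finSumFinEquiv.trans (finCongr hd)
  let b : Basis (Fin 2) F (Fin 2 → F) :=
    (((bX.prod bW).map (Submodule.prodEquivOfIsCompl X W hW)).reindex e)
  refine ⟨Matrix.of (fun i j => b i j), ?_, ?_⟩
  · rw [← Matrix.linearIndependent_rows_iff_isUnit]
    exact b.linearIndependent
  · intro i hi
    have he : e.symm i = Sum.inl ⟨(i : ℕ), hi⟩ := by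
      simp only [e, Equiv.symm_trans_apply, finCongr_symm, finCongr_apply]
      rw [show (Fin.cast hd.symm i) = Fin.castAdd (finrank F W) ⟨(i : ℕ), hi⟩ from
        Fin.ext rfl]
      exact finSumFinEquiv_symm_apply_castAdd _
    have hp : (bX.prod bW) (Sum.inl (⟨(i : ℕ), hi⟩ : Fin (finrank F X)))
        = (bX ⟨(i : ℕ), hi⟩, (0 : W)) :=
      Prod.ext (Basis.prod_apply_inl_fst _ _ _) (Basis.prod_apply_inl_snd _ _ _)
    have hb : (b i : Fin 2 → F) ∈ X := by
      rw [show b i = (((bX.prod bW).map (Submodule.prodEquivOfIsCompl X W hW)).reindex e) i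
        from rfl, Basis.reindex_apply, he, Basis.map_apply, hp,
        Submodule.coe_prodEquivOfIsCompl']
      simpa using (bX ⟨(i : ℕ), hi⟩).2
    exact hb

/-- counting helper -/
lemma count_helper {n : ℕ} (d : Fin n → ℕ) (hd : ∀ b, d b ≤ 2) :
    ((Finset.univ.filter (fun q : Fin n × Fin 2 => ¬ (q.2 : ℕ) < d q.1)).card : ℤ)
      = 2 * n - ∑ b, (d b : ℤ) := by
  rw [Finset.card_filter]
  push_cast
  rw [Fintype.sum_prod_type]
  have h2 : (∑ b : Fin n, ∑ j : Fin 2, if ¬ (j : ℕ) < d b then (1 : ℤ) else 0)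
      = ∑ b : Fin n, (2 - (d b : ℤ)) := Finset.sum_congr rfl fun b _ => by
    rw [Fin.sum_univ_two]
    have := hd b
    simp only [Fin.val_zero, Fin.val_one]
    split_ifs <;> omega
  rw [show (∑ x : Fin n, ∑ y : Fin 2, if ¬ ((x, y).2 : ℕ) < d (x, y).1 then (1 : ℤ) else 0)
      = ∑ b : Fin n, ∑ j : Fin 2, if ¬ (j : ℕ) < d b then (1 : ℤ) else 0 from rfl,
    h2, Finset.sum_sub_distrib, Finset.sum_const, Finset.card_univ, Fintype.card_fin]
  push_cast; ring

set_option maxHeartbeats 1000000 in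
/-- If for each `α` and `β` there are subspaces `X_α, Y_β ⊆ F²` with
`xᵀ A_{αβ} y = 0` for all `x ∈ X_α`, `y ∈ Y_β`, then the rank of the
`(2×2)`-type generic partitioned matrix `A = (A_{αβ} x_{αβ})` over `F(x)` satisfies
`rank A ≤ 2μ + 2ν − Σ_α dim X_α − Σ_β dim Y_β`. -/
theorem genPartMat_rank_le_of_orthogonal_spaces {F : Type*} [Field F] {μ ν : ℕ}
    (A : Fin μ → Fin ν → Matrix (Fin 2) (Fin 2) F)
    (Xs : Fin μ → Submodule F (Fin 2 → F)) (Ys : Fin ν → Submodule F (Fin 2 → F))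
    (horth : ∀ α β, ∀ x ∈ Xs α, ∀ y ∈ Ys β, x ⬝ᵥ (A α β).mulVec y = 0) :
    ((genPartMat A Finset.univ).rank : ℤ) ≤
      2 * μ + 2 * ν - (∑ α, (Module.finrank F (Xs α) : ℤ))
        - (∑ β, (Module.finrank F (Ys β) : ℤ)) := by
  classical
  set σ := (Fin μ × Fin ν)
  set R := MvPolynomial σ F
  set K := FractionRing R
  let φ : R →+* K := algebraMap R K
  let ψ : F →+* K := φ.comp MvPolynomial.C
  choose PA hPu hPX using fun α : Fin μ => exists_isUnit_rows_mem (Xs α)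
  choose QA hQu hQY using fun β : Fin ν => exists_isUnit_rows_mem (Ys β)
  set G : Matrix (Fin μ × Fin 2) (Fin ν × Fin 2) K := genPartMat A Finset.univ with hG
  let P : Matrix (Fin μ × Fin 2) (Fin μ × Fin 2) K :=
    ((blockDiagonal PA).submatrix (Equiv.prodComm (Fin μ) (Fin 2))
      (Equiv.prodComm (Fin μ) (Fin 2))).map ψ
  let Q : Matrix (Fin ν × Fin 2) (Fin ν × Fin 2) K :=
    ((blockDiagonal QA).submatrix (Equiv.prodComm (Fin ν) (Fin 2))
      (Equiv.prodComm (Fin ν) (Fin 2))).map ψ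
  set Z : Matrix (Fin μ × Fin 2) (Fin ν × Fin 2) K := P * G * Qᵀ with hZ
  -- units
  have hPdet : IsUnit P.det := by
    rw [show P.det = ψ ((blockDiagonal PA).submatrix (Equiv.prodComm (Fin μ) (Fin 2))
        (Equiv.prodComm (Fin μ) (Fin 2))).det from (RingHom.map_det ψ _).symm,
      Matrix.det_submatrix_equiv_self, Matrix.det_blockDiagonal]
    exact IsUnit.map ψ (Finset.prod_induction _ IsUnit (fun _ _ => IsUnit.mul) isUnit_one
      (fun α _ => (Matrix.isUnit_iff_isUnit_det _).mp (hPu α)))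
  have hQdet : IsUnit Qᵀ.det := by
    rw [Matrix.det_transpose,
      show Q.det = ψ ((blockDiagonal QA).submatrix (Equiv.prodComm (Fin ν) (Fin 2))
        (Equiv.prodComm (Fin ν) (Fin 2))).det from (RingHom.map_det ψ _).symm,
      Matrix.det_submatrix_equiv_self, Matrix.det_blockDiagonal]
    exact IsUnit.map ψ (Finset.prod_induction _ IsUnit (fun _ _ => IsUnit.mul) isUnit_one
      (fun β _ => (Matrix.isUnit_iff_isUnit_det _).mp (hQu β)))
  have hrank : G.rank = Z.rank := by
    rw [hZ, Matrix.rank_mul_eq_left_of_isUnit_det Qᵀ (P * G) hQdet,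
      Matrix.rank_mul_eq_right_of_isUnit_det P G hPdet]
  -- entries
  have hPapp : ∀ p r, P p r = if p.1 = r.1 then ψ (PA p.1 p.2 r.2) else 0 := by
    intro p r
    simp [P, Matrix.submatrix_apply, Matrix.blockDiagonal_apply, apply_ite ψ]
  have hQapp : ∀ p r, Q p r = if p.1 = r.1 then ψ (QA p.1 p.2 r.2) else 0 := by
    intro p r
    simp [Q, Matrix.submatrix_apply, Matrix.blockDiagonal_apply, apply_ite ψ]
  have hGapp : ∀ r s, G r s = ψ (A r.1 s.1 r.2 s.2) * φ (MvPolynomial.X (r.1, s.1)) := by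
    intro r s
    simp [hG, genPartMat, ψ, _root_.map_mul]
    rfl
  -- key zero entries
  have hZ0 : ∀ p q, (p.2 : ℕ) < finrank F (Xs p.1) → (q.2 : ℕ) < finrank F (Ys q.1) →
      Z p q = 0 := by
    intro p q hp hq
    have key : Z p q = φ (MvPolynomial.X (p.1, q.1)) *
        ψ ((PA p.1 p.2) ⬝ᵥ (A p.1 q.1).mulVec (QA q.1 q.2)) := by
      calc Z p q = ∑ s : Fin ν × Fin 2, (∑ r : Fin μ × Fin 2, P p r * G r s) * Q q s := by
            simp [hZ, Matrix.mul_apply, Matrix.transpose_apply]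
        _ = ∑ l : Fin 2, (∑ k : Fin 2, ψ (PA p.1 p.2 k) * G (p.1, k) (q.1, l))
              * ψ (QA q.1 q.2 l) := by
            simp only [hPapp, hQapp, Fintype.sum_prod_type, ite_mul, zero_mul, mul_ite, mul_zero]
            simp
        _ = _ := by
            simp only [hGapp, dotProduct, Matrix.mulVec, map_sum, _root_.map_mul, Finset.mul_sum,
              Finset.sum_mul]
            rw [Finset.sum_comm, Finset.mul_sum]
            refine Finset.sum_congr rfl fun l _ => ?_
            rw [Finset.sum_mul, Finset.mul_sum]
            refine Finset.sum_congr rfl fun k _ => ?_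
            ring
    rw [key, horth p.1 q.1 _ (hPX p.1 p.2 hp) _ (hQY q.1 q.2 hq), map_zero, mul_zero]
  -- splitting
  let dR' : (Fin μ × Fin 2) → K := fun p => if (p.2 : ℕ) < finrank F (Xs p.1) then 0 else 1
  let dR : (Fin μ × Fin 2) → K := fun p => if (p.2 : ℕ) < finrank F (Xs p.1) then 1 else 0
  let dC : (Fin ν × Fin 2) → K := fun q => if (q.2 : ℕ) < finrank F (Ys q.1) then 0 else 1
  have hsplit : Z = diagonal dR * Z * diagonal dC + diagonal dR' * Z := by
    ext p q
    rw [Matrix.add_apply, Matrix.diagonal_mul, Matrix.mul_diagonal, Matrix.diagonal_mul]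
    by_cases hp : (p.2 : ℕ) < finrank F (Xs p.1)
    · by_cases hq : (q.2 : ℕ) < finrank F (Ys q.1)
      · simp [dR, dR', dC, hp, hq, hZ0 p q hp hq]
      · simp [dR, dR', dC, hp, hq]
    · simp [dR, dR', dC, hp]
  -- rank bounds
  have h1 : (diagonal dR * Z * diagonal dC).rank ≤ (diagonal dC).rank :=
    Matrix.rank_mul_le_right _ _
  have h2 : (diagonal dR' * Z).rank ≤ (diagonal dR').rank :=
    Matrix.rank_mul_le_left _ _
  have hsum : Z.rank ≤ (diagonal dR * Z * diagonal dC).rank + (diagonal dR' * Z).rank := by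
    conv_lhs => rw [hsplit]
    exact matrix_rank_add_le' _ _
  have hXle : ∀ α, finrank F (Xs α) ≤ 2 := by
    intro α
    simpa using (Xs α).finrank_le
  have hYle : ∀ β, finrank F (Ys β) ≤ 2 := by
    intro β
    simpa using (Ys β).finrank_le
  have hdC : ((diagonal dC).rank : ℤ) = 2 * ν - ∑ β, (finrank F (Ys β) : ℤ) := by
    rw [Matrix.rank_diagonal, Fintype.card_subtype]
    rw [show (Finset.univ.filter fun q : Fin ν × Fin 2 => dC q ≠ 0)
        = Finset.univ.filter (fun q : Fin ν × Fin 2 => ¬ (q.2 : ℕ) < finrank F (Ys q.1)) from by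
      apply Finset.filter_congr; intro q _
      by_cases h : (q.2 : ℕ) < finrank F (Ys q.1) <;> simp [dC, h]]
    exact count_helper _ hYle
  have hdR' : ((diagonal dR').rank : ℤ) = 2 * μ - ∑ α, (finrank F (Xs α) : ℤ) := by
    rw [Matrix.rank_diagonal, Fintype.card_subtype]
    rw [show (Finset.univ.filter fun p : Fin μ × Fin 2 => dR' p ≠ 0)
        = Finset.univ.filter (fun p : Fin μ × Fin 2 => ¬ (p.2 : ℕ) < finrank F (Xs p.1)) from by
      apply Finset.filter_congr; intro p _
      by_cases h : (p.2 : ℕ) < finrank F (Xs p.1) <;> simp [dR', h]]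
    exact count_helper _ hXle
  have hfinal : (G.rank : ℤ) ≤ ((diagonal dR * Z * diagonal dC).rank : ℤ)
      + ((diagonal dR' * Z).rank : ℤ) := by
    rw [hrank]; exact_mod_cast hsum
  have h1' : ((diagonal dR * Z * diagonal dC).rank : ℤ) ≤ ((diagonal dC).rank : ℤ) := by
    exact_mod_cast h1
  have h2' : ((diagonal dR' * Z).rank : ℤ) ≤ ((diagonal dR').rank : ℤ) := by
    exact_mod_cast h2
  have : (G.rank : ℤ) ≤ (2 * ν - ∑ β, (finrank F (Ys β) : ℤ))
      + (2 * μ - ∑ α, (finrank F (Xs α) : ℤ)) := by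
    rw [← hdC, ← hdR']; linarith
  linarith
end

section
/- Let A be a generic partitioned matrix with 2×2 blocks A_{αβ} x_{αβ} over F(x), and let I be an edge set whose underlying bipartite graph is a path component C = (α₁β₁, β₁α₂, …) in which the first edge α₁β₁ has rank A_{α₁β₁} = 2 and α₁ has degree 1 in C. Then rank A_C = rank A_{C∖{β₁α₂}}, where A_C (resp. A_{C∖{β₁α₂}}) denotes the matrix keeping only the blocks of C (resp. C minus the edge β₁α₂). -/
open Matrix

set_option maxHeartbeats 1000000

lemma isUnit_det_of_rank_eq_two {F : Type*} [Field F] (M : Matrix (Fin 2) (Fin 2) F)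
    (h : M.rank = 2) : IsUnit M.det := by
  have hr : LinearMap.range M.mulVecLin = ⊤ := by
    apply Submodule.eq_top_of_finrank_eq
    rw [← Matrix.rank, h, Module.finrank_fintype_fun_eq_card, Fintype.card_fin]
  have hsurj : Function.Surjective M.mulVecLin := LinearMap.range_eq_top.mp hr
  have hbij : Function.Bijective M.mulVecLin :=
    ⟨(LinearMap.injective_iff_surjective).mpr hsurj, hsurj⟩
  have hu : IsUnit (Matrix.toLinAlgEquiv' M) := by
    rw [Module.End.isUnit_iff]
    show Function.Bijective (Matrix.toLin' M)
    rw [Matrix.toLin'_apply']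
    exact hbij
  have h2 := hu.map (Matrix.toLinAlgEquiv' (R := F) (n := Fin 2)).symm
  rw [AlgEquiv.symm_apply_apply] at h2
  exact (Matrix.isUnit_iff_isUnit_det M).mp h2


/-- Let `C` be the edge set of a path `(α₁β₁, β₁α₂, α₂β₂, …)` with `k ≥ 2` edges in the
bipartite block-index graph (with distinct row vertices `a 0, a 1, …` and distinct column
vertices `b 0, b 1, …`; the `j`-th edge is `(a ((j+1)/2), b (j/2))`), all of whose edges
correspond to nonzero blocks. If the end edge `α₁β₁ = (a 0, b 0)` is rank-2 (so that
`α₁ = a 0` has degree 1 in `C`), then deleting the adjacent edge `β₁α₂ = (a 1, b 0)`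
does not change the rank: `rank A_C = rank A_{C∖{β₁α₂}}`. -/
theorem genPartMat_path_rank2_end_edge {F : Type*} [Field F] {μ ν : ℕ}
    (A : Fin μ → Fin ν → Matrix (Fin 2) (Fin 2) F)
    (k : ℕ) (hk : 2 ≤ k) (a : ℕ → Fin μ) (b : ℕ → Fin ν)
    (ha : Set.InjOn a {i | i ≤ k / 2}) (hb : Set.InjOn b {i | i ≤ (k - 1) / 2})
    (C : Finset (Fin μ × Fin ν))
    (hC : C = (Finset.range k).image fun j => (a ((j + 1) / 2), b (j / 2)))
    (hCE : ∀ e ∈ C, A e.1 e.2 ≠ 0)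
    (hrk : (A (a 0) (b 0)).rank = 2) :
    (genPartMat A C).rank = (genPartMat A (C.erase (a 1, b 0))).rank := by
  classical
  set R := FractionRing (MvPolynomial (Fin μ × Fin ν) F) with hR
  set f : F →+* R := (algebraMap (MvPolynomial (Fin μ × Fin ν) F) R).comp MvPolynomial.C
    with hf
  set X00 : R := algebraMap (MvPolynomial (Fin μ × Fin ν) F) R (MvPolynomial.X (a 0, b 0))
    with hX00def
  set X10 : R := algebraMap (MvPolynomial (Fin μ × Fin ν) F) R (MvPolynomial.X (a 1, b 0))
    with hX10def
  -- basic membership facts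
  have h00 : (a 0, b 0) ∈ C := by
    rw [hC]; exact Finset.mem_image.mpr ⟨0, Finset.mem_range.mpr (by omega), rfl⟩
  have h10m : (a 1, b 0) ∈ C := by
    rw [hC]; exact Finset.mem_image.mpr ⟨1, Finset.mem_range.mpr (by omega), rfl⟩
  have hmem0 : ∀ β, (a 0, β) ∈ C → β = b 0 := by
    intro β h
    rw [hC] at h
    obtain ⟨j, hj, hje⟩ := Finset.mem_image.mp h
    rw [Finset.mem_range] at hj
    rw [Prod.mk.injEq] at hje
    have hj1 : (j + 1) / 2 = 0 := by
      refine ha ?_ ?_ hje.1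
      · exact Nat.div_le_div_right (by omega)
      · simp
    have hj0 : j = 0 := by omega
    rw [← hje.2, hj0]
  -- nonvanishing of the variables
  have hX00 : X00 ≠ 0 := fun h =>
    MvPolynomial.X_ne_zero _ ((IsFractionRing.to_map_eq_zero_iff (K := R)).mp h)
  -- the end block is invertible
  have hdne : (A (a 0) (b 0)).det ≠ 0 := (isUnit_det_of_rank_eq_two _ hrk).ne_zero
  have hdet : IsUnit ((A (a 0) (b 0)).map f).det := by
    rw [← RingHom.mapMatrix_apply, ← RingHom.map_det]
    exact isUnit_iff_ne_zero.mpr fun h => hdne (f.injective (by rw [h, map_zero]))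
  -- the elementary row-operation block
  set M : Matrix (Fin 2) (Fin 2) R :=
    (X10 * X00⁻¹) • (((A (a 1) (b 0)).map f) * ((A (a 0) (b 0)).map f)⁻¹) with hM
  -- key cancellation identity
  have key : ∀ i l : Fin 2,
      (∑ r2 : Fin 2, M i r2 * (f (A (a 0) (b 0) r2 l) * X00))
        = f (A (a 1) (b 0) i l) * X10 := by
    intro i l
    have hMA : M * ((A (a 0) (b 0)).map f)
        = (X10 * X00⁻¹) • ((A (a 1) (b 0)).map f) := by
      rw [hM, Matrix.smul_mul, Matrix.mul_assoc, Matrix.nonsing_inv_mul _ hdet,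
        Matrix.mul_one]
    have h1 : (∑ r2 : Fin 2, M i r2 * (f (A (a 0) (b 0) r2 l) * X00))
        = (M * ((A (a 0) (b 0)).map f)) i l * X00 := by
      rw [Matrix.mul_apply, Finset.sum_mul]
      exact Finset.sum_congr rfl fun r2 _ => by rw [Matrix.map_apply]; ring
    rw [h1, hMA, Matrix.smul_apply, Matrix.map_apply, smul_eq_mul]
    rw [mul_right_comm _ _ X00, mul_assoc X10, inv_mul_cancel₀ hX00, mul_one]
    ring
  -- the elementary matrix
  set N : Matrix (Fin μ × Fin 2) (Fin μ × Fin 2) R :=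
    Matrix.of (fun p q => if p.1 = a 1 ∧ q.1 = a 0 then M p.2 q.2 else 0) with hN
  have h10 : a 1 ≠ a 0 := by
    intro h
    have := ha (by simp only [Set.mem_setOf_eq]; omega)
      (by simp only [Set.mem_setOf_eq]; omega) h
    omega
  have hN2 : N * N = 0 := by
    ext p q
    rw [Matrix.mul_apply, Matrix.zero_apply]
    refine Finset.sum_eq_zero fun r _ => ?_
    by_cases h1 : p.1 = a 1 ∧ r.1 = a 0
    · have : ¬(r.1 = a 1 ∧ q.1 = a 0) := fun h2 => h10 (h1.2 ▸ h2.1).symm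
      simp [hN, this]
    · simp [hN, h1]
  have hEunit : IsUnit (1 - N).det := by
    apply Matrix.isUnit_det_of_right_inverse (B := 1 + N)
    rw [Matrix.sub_mul, Matrix.mul_add, Matrix.mul_add, Matrix.one_mul, Matrix.mul_one,
      Matrix.one_mul, hN2]
    rw [add_zero, add_sub_cancel_right]
  -- computing the correction term
  have hNG : ∀ (p : Fin μ × Fin 2) (q : Fin ν × Fin 2), (N * genPartMat A C) p q =
      if p.1 = a 1 ∧ q.1 = b 0 then f (A (a 1) (b 0) p.2 q.2) * X10 else 0 := by
    rintro ⟨p1, p2⟩ ⟨q1, q2⟩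
    rw [Matrix.mul_apply]
    by_cases hp : p1 = a 1
    · have hstep : ∀ r : Fin μ × Fin 2,
          N (p1, p2) r * genPartMat A C r (q1, q2) =
          if r.1 = a 0 then M p2 r.2 * genPartMat A C (a 0, r.2) (q1, q2) else 0 := by
        rintro ⟨r1, r2⟩
        by_cases hr : r1 = a 0
        · subst hr; simp [hN, hp]
        · simp [hN, hr]
      rw [Finset.sum_congr rfl fun r _ => hstep r]
      rw [Fintype.sum_prod_type_right]
      simp only [Finset.sum_ite_eq', Finset.mem_univ, if_true]
      by_cases hq : q1 = b 0
      · subst hq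
        have hG : ∀ r2 : Fin 2, genPartMat A C (a 0, r2) (b 0, q2)
            = f (A (a 0) (b 0) r2 q2) * X00 := by
          intro r2
          simp only [genPartMat, Matrix.of_apply, h00, if_true, _root_.map_mul]
          rfl
        simp_rw [hG]
        rw [key p2 q2, if_pos ⟨hp, trivial⟩]
      · have hq' : (a 0, q1) ∉ C := fun h => hq (hmem0 q1 h)
        have hG0 : ∀ r2 : Fin 2, genPartMat A C (a 0, r2) (q1, q2) = 0 := by
          intro r2
          simp only [genPartMat, Matrix.of_apply, hq', if_false]
        simp_rw [hG0, mul_zero]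
        rw [Finset.sum_const_zero, if_neg (fun h => hq h.2)]
    · have hz : ∀ r : Fin μ × Fin 2, N (p1, p2) r * genPartMat A C r (q1, q2) = 0 :=
        fun r => by simp [hN, hp]
      rw [Finset.sum_congr rfl fun r _ => hz r, Finset.sum_const_zero,
        if_neg fun h => hp h.1]
  -- the row operation turns A_C into A_{C \ (a1,b0)}
  have hmain : (1 - N) * genPartMat A C = genPartMat A (C.erase (a 1, b 0)) := by
    have hsub : (1 - N) * genPartMat A C = genPartMat A C - N * genPartMat A C := by
      rw [Matrix.sub_mul, Matrix.one_mul]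
    rw [hsub]
    ext p q
    obtain ⟨p1, p2⟩ := p
    obtain ⟨q1, q2⟩ := q
    rw [Matrix.sub_apply, hNG (p1, p2) (q1, q2)]
    by_cases hpq : p1 = a 1 ∧ q1 = b 0
    · obtain ⟨hp, hq⟩ := hpq
      subst hp; subst hq
      have hnm : ((a 1 : Fin μ), (b 0 : Fin ν)) ∉ C.erase (a 1, b 0) :=
        Finset.notMem_erase _ _
      rw [if_pos ⟨rfl, rfl⟩]
      show genPartMat A C (a 1, p2) (b 0, q2) - _
        = genPartMat A (C.erase (a 1, b 0)) (a 1, p2) (b 0, q2)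
      simp only [genPartMat, Matrix.of_apply, h10m, hnm, if_true, if_false,
        _root_.map_mul]
      show f (A (a 1) (b 0) p2 q2) * X10 - f (A (a 1) (b 0) p2 q2) * X10 = 0
      ring
    · have hne : (p1, q1) ≠ (a 1, b 0) := fun h =>
        hpq ⟨congrArg Prod.fst h, congrArg Prod.snd h⟩
      have hmemiff : ((p1, q1) ∈ C.erase (a 1, b 0)) = ((p1, q1) ∈ C) := by
        rw [eq_iff_iff]
        exact ⟨fun h => Finset.mem_of_mem_erase h, fun h => Finset.mem_erase.mpr ⟨hne, h⟩⟩
      simp only [genPartMat, Matrix.of_apply, hpq, if_false, hmemiff, sub_zero]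
  -- conclude: left multiplication by an invertible matrix preserves rank
  calc (genPartMat A C).rank = ((1 - N) * genPartMat A C).rank :=
        (Matrix.rank_mul_eq_right_of_isUnit_det _ _ hEunit).symm
    _ = (genPartMat A (C.erase (a 1, b 0))).rank := by rw [hmain]
end

section
/- Let C be a cycle of length 2k in the bipartite block-index graph of a generic partitioned matrix A with 2×2 blocks A_{αβ} x_{αβ}, with edges alternately colored + and −, such that every +-edge αβ of C has rank A_{αβ} = 2. Let C⁻ be the set of −-edges of C. Then rank A_C = rank A_{C∖C⁻} = 2k. -/
open Matrix


lemma det_ne_zero_of_rank_eq_two {F : Type*} [Field F] {A : Matrix (Fin 2) (Fin 2) F}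
    (h : A.rank = 2) : A.det ≠ 0 := by
  have h2 : LinearMap.range A.mulVecLin = ⊤ := by
    apply Submodule.eq_top_of_finrank_eq
    rw [← Matrix.rank, h, Module.finrank_fintype_fun_eq_card, Fintype.card_fin]
  have hsurj : Function.Surjective A.mulVec := fun y =>
    (LinearMap.range_eq_top.mp h2 y).imp fun x hx => by simpa using hx
  exact ((Matrix.isUnit_iff_isUnit_det A).mp
    (Matrix.mulVec_surjective_iff_isUnit.mp hsurj)).ne_zero

theorem genPartMat_aux {F : Type*} [Field F] {μ ν : ℕ} (k : ℕ)
    (A : Fin μ → Fin ν → Matrix (Fin 2) (Fin 2) F)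
    (a : Fin (k + 2) → Fin μ) (b : Fin (k + 2) → Fin ν)
    (ha : Function.Injective a) (hb : Function.Injective b)
    (hplus : ∀ i, (A (a i) (b i)).rank = 2)
    (J : Finset (Fin μ × Fin ν)) (v : Fin μ × Fin ν → F)
    (hdiag : ∀ i, (a i, b i) ∈ J) (hv1 : ∀ i, v (a i, b i) = 1)
    (hsupp : ∀ p ∈ J, (∃ i, p.1 = a i) ∧ ∃ j, p.2 = b j)
    (hv0 : ∀ i j, i ≠ j → (a i, b j) ∈ J → v (a i, b j) = 0) :
    (genPartMat A J).rank = 2 * (k + 2) := by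
  classical
  set R := MvPolynomial (Fin μ × Fin ν) F with hR
  set K := FractionRing R with hK
  set φ : R →+* K := algebraMap R K with hφ
  set M := genPartMat A J with hM
  set r : Fin (k + 2) × Fin 2 → Fin μ × Fin 2 := fun z => (a z.1, z.2) with hr
  set c : Fin (k + 2) × Fin 2 → Fin ν × Fin 2 := fun z => (b z.1, z.2) with hcc
  have hrinj : Function.Injective r := fun z w h => by
    obtain ⟨h1, h2⟩ := Prod.mk.injEq .. ▸ h
    exact Prod.ext (ha h1) h2
  have hcinj : Function.Injective c := fun z w h => by
    obtain ⟨h1, h2⟩ := Prod.mk.injEq .. ▸ h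
    exact Prod.ext (hb h1) h2
  set B₀ : Matrix (Fin (k + 2) × Fin 2) (Fin (k + 2) × Fin 2) R :=
    Matrix.of (fun z w => if (a z.1, b w.1) ∈ J then
      MvPolynomial.C (A (a z.1) (b w.1) z.2 w.2) * MvPolynomial.X (a z.1, b w.1) else 0)
    with hB₀
  set B : Matrix (Fin (k + 2) × Fin 2) (Fin (k + 2) × Fin 2) K := M.submatrix r c with hB
  have hBmap : B = B₀.map φ := by
    ext z w
    simp only [hB, hB₀, Matrix.submatrix_apply, Matrix.map_apply, Matrix.of_apply, hM,
      genPartMat, hr, hcc]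
    split
    · simp
      rfl
    · simp
  -- determinant of B₀ is nonzero
  have hdet₀ : B₀.det ≠ 0 := by
    intro h0
    have hev : (MvPolynomial.eval v).mapMatrix B₀ =
        (Matrix.blockDiagonal (fun i => A (a i) (b i))).submatrix
          (Equiv.prodComm (Fin (k + 2)) (Fin 2)) (Equiv.prodComm (Fin (k + 2)) (Fin 2)) := by
      ext z w
      simp only [RingHom.mapMatrix_apply, Matrix.map_apply, hB₀, Matrix.of_apply,
        Matrix.submatrix_apply, Equiv.prodComm_apply, Prod.swap, Matrix.blockDiagonal_apply]
      by_cases hzw : z.1 = w.1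
      · rw [if_pos hzw, hzw, if_pos (hdiag w.1)]
        simp [hv1 w.1]
      · rw [if_neg hzw]
        by_cases hmem : (a z.1, b w.1) ∈ J
        · rw [if_pos hmem]
          simp [hv0 z.1 w.1 hzw hmem]
        · rw [if_neg hmem]
          simp
    have : (MvPolynomial.eval v) B₀.det = ∏ i, (A (a i) (b i)).det := by
      rw [RingHom.map_det, hev, Matrix.det_submatrix_equiv_self, Matrix.det_blockDiagonal]
    rw [h0, map_zero] at this
    exact Finset.prod_ne_zero_iff.mpr
      (fun i _ => det_ne_zero_of_rank_eq_two (hplus i)) this.symm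
  have hdetB : B.det ≠ 0 := by
    rw [hBmap, ← RingHom.mapMatrix_apply, ← RingHom.map_det]
    exact fun h => hdet₀ (IsFractionRing.injective R K (h.trans (map_zero φ).symm))
  have hrankB : B.rank = 2 * (k + 2) := by
    rw [Matrix.rank_of_isUnit B ((Matrix.isUnit_iff_isUnit_det B).mpr
      (isUnit_iff_ne_zero.mpr hdetB)), Fintype.card_prod, Fintype.card_fin, Fintype.card_fin,
      Nat.mul_comm]
  -- selection matrices
  set P : Matrix (Fin (k + 2) × Fin 2) (Fin μ × Fin 2) K :=
    Matrix.of (fun z p => if r z = p then 1 else 0) with hP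
  set Q : Matrix (Fin ν × Fin 2) (Fin (k + 2) × Fin 2) K :=
    Matrix.of (fun q w => if c w = q then 1 else 0) with hQ
  have hPMQ : P * M * Q = B := by
    ext z w
    simp only [Matrix.mul_apply, hQ, Matrix.of_apply, mul_ite, mul_one, mul_zero, hB,
      Matrix.submatrix_apply, Finset.sum_ite_eq, Finset.mem_univ, if_true]
    simp [hP, ite_mul, Finset.sum_ite_eq]
  have hle1 : B.rank ≤ M.rank := by
    rw [← hPMQ]
    exact le_trans (Matrix.rank_mul_le_left _ _) (Matrix.rank_mul_le_right _ _)
  have hMPQ : Pᵀ * (B * Qᵀ) = M := by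
    ext p q
    by_cases hp : ∃ z0, r z0 = p
    · obtain ⟨z0, rfl⟩ := hp
      by_cases hq : ∃ w0, c w0 = q
      · obtain ⟨w0, rfl⟩ := hq
        have h1 : (B * Qᵀ) z0 (c w0) = B z0 w0 := by
          simp [Matrix.mul_apply, hQ, mul_ite, hcinj.eq_iff]
        have h2 : ∀ z, (B * Qᵀ) z (c w0) = B z w0 := by
          intro z
          simp [Matrix.mul_apply, hQ, mul_ite, hcinj.eq_iff]
        simp [Matrix.mul_apply, hP, ite_mul, hrinj.eq_iff, h2, hB, hQ, mul_ite, hcinj.eq_iff]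
      · have hnot : M (r z0) q = 0 := by
          rw [hM, genPartMat]
          simp only [Matrix.of_apply]
          rw [if_neg]
          intro hmem
          obtain ⟨_, ⟨j, hj⟩⟩ := hsupp _ hmem
          exact hq ⟨(j, q.2), by simp [hcc, ← hj]⟩
        rw [hnot, Matrix.mul_apply]
        apply Finset.sum_eq_zero
        intro z _
        have hz : (B * Qᵀ) z q = 0 := by
          rw [Matrix.mul_apply]
          apply Finset.sum_eq_zero
          intro w _
          rw [Matrix.transpose_apply, hQ, Matrix.of_apply, if_neg (fun h => hq ⟨w, h⟩), mul_zero]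
        rw [hz, mul_zero]
    · have hnot : M p q = 0 := by
        rw [hM, genPartMat]
        simp only [Matrix.of_apply]
        rw [if_neg]
        intro hmem
        obtain ⟨⟨i, hi⟩, _⟩ := hsupp _ hmem
        exact hp ⟨(i, p.2), by simp [hr, ← hi]⟩
      rw [hnot, Matrix.mul_apply]
      apply Finset.sum_eq_zero
      intro z _
      rw [Matrix.transpose_apply, hP, Matrix.of_apply, if_neg (fun h => hp ⟨z, h⟩), zero_mul]
  have hle2 : M.rank ≤ B.rank := by
    rw [← hMPQ]
    exact le_trans (Matrix.rank_mul_le_right _ _) (Matrix.rank_mul_le_left _ _)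
  omega

/-- Let `C` be a cycle of length `2(k+2)` in the bipartite block-index graph, with row
vertices `a i`, column vertices `b i`, `+`-edges `(a i, b i)` and `−`-edges
`(a (i+1), b i)` (indices mod `k+2`), alternately colored. If every `+`-edge is rank-2
(and the `−`-edges are nonzero blocks), then, with `C⁻` the set of `−`-edges,
`rank A_C = rank A_{C∖C⁻} = 2(k+2)`. -/
theorem genPartMat_cycle_rank {F : Type*} [Field F] {μ ν : ℕ} (k : ℕ)
    (A : Fin μ → Fin ν → Matrix (Fin 2) (Fin 2) F)
    (a : Fin (k + 2) → Fin μ) (b : Fin (k + 2) → Fin ν)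
    (ha : Function.Injective a) (hb : Function.Injective b)
    (hplus : ∀ i, (A (a i) (b i)).rank = 2)
    (hminus : ∀ i, A (a (i + 1)) (b i) ≠ 0)
    (C Cm : Finset (Fin μ × Fin ν))
    (hC : C = (Finset.univ.image fun i => (a i, b i)) ∪
      (Finset.univ.image fun i : Fin (k + 2) => (a (i + 1), b i)))
    (hCm : Cm = Finset.univ.image fun i : Fin (k + 2) => (a (i + 1), b i)) :
    (genPartMat A C).rank = (genPartMat A (C \ Cm)).rank ∧
      (genPartMat A C).rank = 2 * (k + 2) := by
  classical
  have hone : ∀ j : Fin (k + 2), j + 1 ≠ j := by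
    intro j h
    have h1 : (1 : Fin (k + 2)) = 0 := by
      have := add_eq_left.mp h
      exact this
    exact one_ne_zero h1
  have memCm : ∀ i j, ((a i, b j) ∈ Cm ↔ i = j + 1) := by
    intro i j
    rw [hCm, Finset.mem_image]
    constructor
    · rintro ⟨i', -, h⟩
      obtain ⟨h1, h2⟩ := Prod.mk.injEq .. ▸ h
      rw [← ha h1, hb h2]
    · rintro rfl
      exact ⟨j, Finset.mem_univ j, rfl⟩
  have memC : ∀ i j, ((a i, b j) ∈ C ↔ i = j ∨ i = j + 1) := by
    intro i j
    rw [hC, Finset.mem_union, Finset.mem_image, ← hCm, memCm]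
    constructor
    · rintro (⟨i', -, h⟩ | h)
      · obtain ⟨h1, h2⟩ := Prod.mk.injEq .. ▸ h
        exact Or.inl (by rw [← ha h1, hb h2])
      · exact Or.inr h
    · rintro (h | h)
      · exact Or.inl ⟨j, Finset.mem_univ j, by rw [h]⟩
      · exact Or.inr h
  set v : Fin μ × Fin ν → F := fun e => if e ∈ Cm then 0 else 1 with hv
  have hv1 : ∀ i, v (a i, b i) = 1 := by
    intro i
    rw [hv]
    exact if_neg (fun h => hone i ((memCm i i).mp h).symm)
  have hsuppC : ∀ p ∈ C, (∃ i, p.1 = a i) ∧ ∃ j, p.2 = b j := by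
    intro p hp
    rw [hC, Finset.mem_union, Finset.mem_image, Finset.mem_image] at hp
    rcases hp with ⟨i, -, rfl⟩ | ⟨i, -, rfl⟩
    · exact ⟨⟨i, rfl⟩, ⟨i, rfl⟩⟩
    · exact ⟨⟨i + 1, rfl⟩, ⟨i, rfl⟩⟩
  have h1 : (genPartMat A C).rank = 2 * (k + 2) := by
    apply genPartMat_aux k A a b ha hb hplus C v
    · intro i
      exact (memC i i).mpr (Or.inl rfl)
    · exact hv1
    · exact hsuppC
    · intro i j hij hmem
      rcases (memC i j).mp hmem with h | h
      · exact absurd h hij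
      · exact if_pos ((memCm i j).mpr h)
  have memC' : ∀ i j, ((a i, b j) ∈ C \ Cm ↔ i = j) := by
    intro i j
    rw [Finset.mem_sdiff, memC, memCm]
    constructor
    · rintro ⟨rfl | h, h2⟩
      · rfl
      · exact absurd h h2
    · intro h
      refine ⟨Or.inl h, fun h2 => hone j ?_⟩
      rw [← h2]
      exact h
  have h2 : (genPartMat A (C \ Cm)).rank = 2 * (k + 2) := by
    apply genPartMat_aux k A a b ha hb hplus (C \ Cm) v
    · intro i
      exact (memC' i i).mpr rfl
    · exact hv1
    · intro p hp
      exact hsuppC p (Finset.mem_sdiff.mp hp).1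
    · intro i j hij hmem
      exact absurd ((memC' i j).mp hmem) hij
  exact ⟨h1.trans h2.symm, h1⟩
end

section
/- Let k ≥ 1 and let M be a k×k matrix over F(x₁,…,x_m) such that all 'subdiagonal' entries M_{i+1,i} (i=1,…,k−1) and the corner entry M_{1,k} are nonzero, each being a nonzero F-scalar multiple of a distinct indeterminate, and all other entries are either zero or nonzero scalar multiples of further distinct indeterminates. Then rank M = k. -/
open Matrix

/-- Let `M` be a `k × k` matrix (`k ≥ 1`) over `F(x₁,…,x_m)` in which each nonzero entry is
a nonzero `F`-scalar multiple of an indeterminate (entry `(i,j)` is `c i j · x_{v i j}`,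
encoded by `v i j : Option (Fin m)` with scalar `c i j ≠ 0` when present), no indeterminate
appears in two different entries, and the subdiagonal entries `M_{i+1,i}` (`i = 1,…,k−1`)
together with the corner entry `M_{1,k}` are all nonzero. Then `rank M = k`. -/
theorem rank_eq_of_distinct_variable_entries {F : Type*} [Field F] (m k : ℕ) (hk : 0 < k)
    (v : Fin k → Fin k → Option (Fin m)) (c : Fin k → Fin k → F)
    (hc : ∀ i j t, v i j = some t → c i j ≠ 0)
    (hdist : ∀ i j i' j' t, v i j = some t → v i' j' = some t → (i, j) = (i', j'))
    (M : Matrix (Fin k) (Fin k) (FractionRing (MvPolynomial (Fin m) F)))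
    (hM : ∀ i j, M i j = Option.elim (v i j) 0 fun t =>
      algebraMap (MvPolynomial (Fin m) F) _ (MvPolynomial.C (c i j) * MvPolynomial.X t))
    (hsub : ∀ i : ℕ, ∀ h : i + 1 < k, v ⟨i + 1, h⟩ ⟨i, Nat.lt_of_succ_lt h⟩ ≠ none)
    (hcorner : v ⟨0, hk⟩ ⟨k - 1, Nat.sub_lt hk Nat.one_pos⟩ ≠ none) :
    M.rank = k := by
  classical
  haveI : NeZero k := ⟨hk.ne'⟩
  set R := MvPolynomial (Fin m) F
  set N : Matrix (Fin k) (Fin k) R := fun i j =>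
    Option.elim (v i j) 0 fun t => MvPolynomial.C (c i j) * MvPolynomial.X t with hN
  have hMN : M = N.map (algebraMap R (FractionRing R)) := by
    ext i j
    rw [hM]
    rw [Matrix.map_apply]
    simp only [hN]
    cases v i j <;> simp <;> rfl
  -- key: v (j+1) j ≠ none for all j
  have hcyc : ∀ j : Fin k, v (j + 1) j ≠ none := by
    intro j
    by_cases h : j.val + 1 < k
    · have h1 : (j + 1 : Fin k) = ⟨j.val + 1, h⟩ := by
        apply Fin.ext
        simp [Fin.add_def, Nat.mod_eq_of_lt h]
      have h2 : j = (⟨j.val, Nat.lt_of_succ_lt h⟩ : Fin k) := by apply Fin.ext; rfl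
      rw [h1]
      convert hsub j.val h using 2
    · have hj : j.val = k - 1 := by omega
      have h1 : (j + 1 : Fin k) = ⟨0, hk⟩ := by
        apply Fin.ext
        have hk1 : k - 1 + 1 = k := Nat.succ_pred_eq_of_pos hk
        simp [Fin.add_def, hj, hk1]
      have h2 : j = (⟨k - 1, Nat.sub_lt hk Nat.one_pos⟩ : Fin k) := by apply Fin.ext; exact hj
      rw [h1, h2]
      exact hcorner
  let φ : Fin m → F := fun t => if ∃ j : Fin k, v (j + 1) j = some t then 1 else 0
  have hE : ∀ i j, MvPolynomial.eval φ (N i j) = if i = j + 1 then c i j else 0 := by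
    intro i j
    simp only [hN]
    cases hv : v i j with
    | none =>
      simp only [Option.elim]
      rw [map_zero]
      split
      · next h => exact absurd (h ▸ hv) (hcyc j)
      · rfl
    | some t =>
      simp only [Option.elim, _root_.map_mul, MvPolynomial.eval_C, MvPolynomial.eval_X]
      by_cases h : i = j + 1
      · have hφ : φ t = 1 := by
          simp only [φ]
          rw [if_pos ⟨j, h ▸ hv⟩]
        rw [hφ, if_pos h, mul_one]
      · have : φ t = 0 := by
          simp only [φ]
          rw [if_neg]
          rintro ⟨j', hj'⟩
          have heq := hdist i j (j' + 1) j' t hv hj'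
          rw [Prod.mk.injEq] at heq
          exact h (heq.2 ▸ heq.1)
        rw [this, if_neg h, mul_zero]
  let σ₀ : Equiv.Perm (Fin k) := Equiv.addRight 1
  have hdetE : MvPolynomial.eval φ N.det ≠ 0 := by
    rw [RingHom.map_det, RingHom.mapMatrix_apply]
    have : (N.map (MvPolynomial.eval φ)).det
        = Equiv.Perm.sign σ₀ • ∏ j, c (j + 1) j := by
      rw [Matrix.det_apply]
      rw [Finset.sum_eq_single σ₀]
      · congr 1
        apply Finset.prod_congr rfl
        intro j _
        rw [Matrix.map_apply, hE, if_pos (show σ₀ j = j + 1 from rfl)]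
        rfl
      · intro σ _ hσ
        have : ∃ j, σ j ≠ j + 1 := by
          by_contra hcon
          push_neg at hcon
          exact hσ (Equiv.ext fun j => hcon j)
        obtain ⟨j, hj⟩ := this
        have : (N.map (MvPolynomial.eval φ)) (σ j) j = 0 := by
          rw [Matrix.map_apply, hE, if_neg hj]
        rw [Finset.prod_eq_zero (f := fun i => (N.map (MvPolynomial.eval φ)) (σ i) i)
          (Finset.mem_univ j) this, smul_zero]
      · intro h
        exact absurd (Finset.mem_univ σ₀) h
    rw [this]
    have hprod : (∏ j, c (j + 1) j) ≠ 0 := by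
      apply Finset.prod_ne_zero_iff.mpr
      intro j _
      obtain ⟨t, ht⟩ := Option.ne_none_iff_exists'.mp (hcyc j)
      exact hc _ _ t ht
    rcases Int.units_eq_one_or (Equiv.Perm.sign σ₀) with h | h <;> rw [h] <;> simpa
  have hNdet : N.det ≠ 0 := by
    intro h
    rw [h, map_zero] at hdetE
    exact hdetE rfl
  have hMdet : M.det ≠ 0 := by
    rw [hMN, ← RingHom.mapMatrix_apply, ← RingHom.map_det]
    intro h
    exact hNdet (IsFractionRing.injective R (FractionRing R) (h.trans (map_zero _).symm))
  have : IsUnit M := (Matrix.isUnit_iff_isUnit_det M).mpr (isUnit_iff_ne_zero.mpr hMdet)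
  rw [Matrix.rank_of_isUnit M this, Fintype.card_fin]
end

section
/- Let I be a matching of a (2×2)-type generic partitioned matrix A, meaning rank A_I > rank A_{I∖{e}} for all e ∈ I, and suppose I satisfies (Deg), (Path), (Cycle), (VL) so that rank A_I = r(I) := |I| + (number of isolated rank-2 edges of I). Let Ã_I be the matrix over F obtained from A_I by substituting x_{αβ} = 1 for αβ ∈ I and x_{αβ} = 0 otherwise. Then rank Ã_I = rank A_I. -/
open Matrix

section RankMinor

variable {K : Type*} [Field K] {m n : Type*} [Fintype m] [Fintype n] [DecidableEq m] [DecidableEq n]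

lemma submatrix_eq_mul_mul {s : ℕ} (M : Matrix m n K) (f : Fin s → m) (g : Fin s → n) :
    M.submatrix f g =
      (1 : Matrix m m K).submatrix f _root_.id * M * (1 : Matrix n n K).submatrix _root_.id g := by
  ext i j
  simp only [Matrix.mul_apply, Matrix.submatrix_apply, Matrix.one_apply, _root_.id]
  simp [ite_mul, mul_ite, Finset.sum_ite_eq, Finset.sum_ite_eq']

lemma le_rank_of_det_ne_zero {s : ℕ} (M : Matrix m n K) {f : Fin s → m} {g : Fin s → n}
    (h : (M.submatrix f g).det ≠ 0) : s ≤ M.rank := by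
  have hU : IsUnit (M.submatrix f g) := (Matrix.isUnit_iff_isUnit_det _).mpr h.isUnit
  have hrank : (M.submatrix f g).rank = s := by
    rw [Matrix.rank_of_isUnit _ hU, Fintype.card_fin]
  calc s = (M.submatrix f g).rank := hrank.symm
    _ ≤ M.rank := by
        rw [submatrix_eq_mul_mul M f g]
        exact le_trans (Matrix.rank_mul_le_left _ _) (Matrix.rank_mul_le_right _ _)

lemma det_submatrix_eq_zero_of_rank_lt {s : ℕ} {M : Matrix m n K} {f : Fin s → m} {g : Fin s → n}
    (h : M.rank < s) : (M.submatrix f g).det = 0 := by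
  by_contra h0
  exact absurd (le_rank_of_det_ne_zero M h0) (not_le.mpr h)

lemma exists_linearIndependent_cols (M : Matrix m n K) {s : ℕ} (hs : M.rank = s) :
    ∃ g : Fin s → n, LinearIndependent K fun j => Mᵀ (g j) := by
  classical
  obtain ⟨b, hbsub, hbspan, hbli⟩ := exists_linearIndependent K (Set.range Mᵀ)
  have hbfin : b.Finite := (Set.finite_range Mᵀ).subset hbsub
  haveI := hbfin.fintype
  have hcard : Fintype.card b = s := by
    have h1 : Module.finrank K (Submodule.span K b) = b.toFinset.card :=
      finrank_span_set_eq_card hbli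
    have h2 : M.rank = Module.finrank K (Submodule.span K b) := by
      rw [Matrix.rank_eq_finrank_span_cols, Matrix.col, ← hbspan]
    rw [Set.toFinset_card] at h1
    rw [h2, h1] at hs
    exact hs
  let e : Fin s ≃ b := (Fintype.equivFinOfCardEq hcard).symm
  have hmem : ∀ j : Fin s, (↑(e j) : m → K) ∈ Set.range Mᵀ := fun j => hbsub (e j).2
  choose gf hg using hmem
  refine ⟨gf, ?_⟩
  have heq : (fun j => Mᵀ (gf j)) = fun j => (↑(e j) : m → K) := funext fun j => hg j
  rw [heq]
  exact hbli.comp (fun j => e j) e.injective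

lemma exists_submatrix_det_ne_zero (M : Matrix m n K) {s : ℕ} (hs : M.rank = s) :
    ∃ (f : Fin s → m) (g : Fin s → n), (M.submatrix f g).det ≠ 0 := by
  classical
  obtain ⟨g, hg⟩ := exists_linearIndependent_cols M hs
  set N : Matrix m (Fin s) K := M.submatrix _root_.id g with hN
  have hrankN : N.rank = s := by
    rw [Matrix.rank_eq_finrank_span_cols]
    have h := linearIndependent_iff_card_eq_finrank_span.mp hg
    rw [Fintype.card_fin] at h
    have hr : Set.range N.col = Set.range fun j => Mᵀ (g j) := rfl
    rw [hr]
    exact h.symm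
  have hrankNT : Nᵀ.rank = s := by rw [Matrix.rank_transpose]; exact hrankN
  obtain ⟨f, hf⟩ := exists_linearIndependent_cols Nᵀ hrankNT
  have hf' : LinearIndependent K fun i => N (f i) := by
    have : (fun i => Nᵀᵀ (f i)) = fun i => N (f i) := by
      funext i; rw [Matrix.transpose_transpose]
    rwa [this] at hf
  refine ⟨f, g, ?_⟩
  have hsq : M.submatrix f g = N.submatrix f _root_.id := by
    rw [hN, Matrix.submatrix_submatrix]
    rfl
  rw [hsq]
  intro hdet
  have hdet' : (N.submatrix f _root_.id)ᵀ.det = 0 := by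
    rw [Matrix.det_transpose]; exact hdet
  obtain ⟨v, hv0, hv⟩ := (Matrix.exists_mulVec_eq_zero_iff).mpr hdet'
  have hsum : ∑ j, v j • N (f j) = 0 := by
    funext k
    have hk := congrFun hv k
    simp only [Matrix.mulVec, dotProduct, Matrix.transpose_apply,
      Matrix.submatrix_apply, _root_.id, Pi.zero_apply] at hk
    simpa [Finset.sum_apply, mul_comm] using hk
  exact hv0 (funext fun i => Fintype.linearIndependent_iff.mp hf' v hsum i)

end RankMinor

section PolyPart

open MvPolynomial

variable {F : Type*} [Field F] {μ ν : ℕ}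

/-- The generic partitioned matrix as a matrix over the polynomial ring. -/
noncomputable def polyMat (A : Fin μ → Fin ν → Matrix (Fin 2) (Fin 2) F)
    (J : Finset (Fin μ × Fin ν)) :
    Matrix (Fin μ × Fin 2) (Fin ν × Fin 2) (MvPolynomial (Fin μ × Fin ν) F) :=
  Matrix.of fun p q =>
    if (p.1, q.1) ∈ J then
      MvPolynomial.C (A p.1 q.1 p.2 q.2) * MvPolynomial.X (p.1, q.1) else 0

lemma prod_C_mul_X {ι : Type*} {σ R : Type*} [CommSemiring R] (t : Finset ι)
    (a : ι → R) (E : ι → σ) :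
    (∏ i ∈ t, (MvPolynomial.C (a i) * MvPolynomial.X (E i))) =
      MvPolynomial.monomial (∑ i ∈ t, Finsupp.single (E i) 1) (∏ i ∈ t, a i) := by
  classical
  induction t using Finset.induction_on with
  | empty => simp
  | insert _ _ h ih =>
      rw [Finset.prod_insert h, ih, Finset.prod_insert h, Finset.sum_insert h,
        C_mul_X_eq_monomial, monomial_mul]

lemma support_det_aux {s : ℕ} (A : Fin μ → Fin ν → Matrix (Fin 2) (Fin 2) F)
    (I : Finset (Fin μ × Fin ν)) (f : Fin s → Fin μ × Fin 2) (g : Fin s → Fin ν × Fin 2)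
    {md : (Fin μ × Fin ν) →₀ ℕ} (hmd : md ∈ ((polyMat A I).submatrix f g).det.support) :
    ∃ σ : Equiv.Perm (Fin s), (∀ i, ((f (σ i)).1, (g i).1) ∈ I) ∧
      md = ∑ i : Fin s, Finsupp.single ((f (σ i)).1, (g i).1) 1 := by
  classical
  have hmd' := MvPolynomial.mem_support_iff.mp hmd
  rw [Matrix.det_apply] at hmd'
  rw [MvPolynomial.coeff_sum] at hmd'
  obtain ⟨σ, -, hσ⟩ := Finset.exists_ne_zero_of_sum_ne_zero hmd'
  refine ⟨σ, ?_⟩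
  rw [Units.smul_def, MvPolynomial.coeff_smul] at hσ
  have hcoeff : MvPolynomial.coeff md (∏ i, (polyMat A I).submatrix f g (σ i) i) ≠ 0 := by
    intro h0; rw [h0, smul_zero] at hσ; exact hσ rfl
  by_cases hall : ∀ i, ((f (σ i)).1, (g i).1) ∈ I
  · refine ⟨hall, ?_⟩
    have hprod : (∏ i, (polyMat A I).submatrix f g (σ i) i) =
        MvPolynomial.monomial (∑ i : Fin s, Finsupp.single ((f (σ i)).1, (g i).1) 1)
          (∏ i, A (f (σ i)).1 (g i).1 (f (σ i)).2 (g i).2) := by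
      rw [← prod_C_mul_X]
      refine Finset.prod_congr rfl fun i _ => ?_
      simp only [Matrix.submatrix_apply, polyMat, Matrix.of_apply, if_pos (hall i)]
    rw [hprod, MvPolynomial.coeff_monomial] at hcoeff
    by_cases heq : (∑ i : Fin s, Finsupp.single ((f (σ i)).1, (g i).1) 1) = md
    · exact heq.symm
    · rw [if_neg heq] at hcoeff
      exact absurd rfl hcoeff
  · push_neg at hall
    obtain ⟨i0, hi0⟩ := hall
    have : (∏ i, (polyMat A I).submatrix f g (σ i) i) = 0 := by
      refine Finset.prod_eq_zero (Finset.mem_univ i0) ?_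
      simp only [Matrix.submatrix_apply, polyMat, Matrix.of_apply, if_neg hi0]
    rw [this] at hcoeff
    exact absurd rfl hcoeff

end PolyPart

section PolyPart2

open MvPolynomial

variable {F : Type*} [Field F] {μ ν : ℕ}

lemma sum_single_fst {s : ℕ} (E : Fin s → Fin μ × Fin ν) (α : Fin μ) :
    (∑ β, (∑ i : Fin s, Finsupp.single (E i) 1) (α, β)) =
      ∑ i : Fin s, (if (E i).1 = α then 1 else 0) := by
  classical
  have happ : ∀ u, (∑ i : Fin s, Finsupp.single (E i) 1) u
      = ∑ i : Fin s, (if E i = u then 1 else 0) := by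
    intro u
    rw [Finset.sum_apply']
    exact Finset.sum_congr rfl fun i _ => Finsupp.single_apply
  simp only [happ]
  rw [Finset.sum_comm]
  refine Finset.sum_congr rfl fun i _ => ?_
  obtain ⟨a, b⟩ := E i
  by_cases ha : a = α
  · simp [Prod.ext_iff, ha, Finset.sum_ite_eq]
  · simp [Prod.ext_iff, ha]

lemma sum_single_snd {s : ℕ} (E : Fin s → Fin μ × Fin ν) (β : Fin ν) :
    (∑ α, (∑ i : Fin s, Finsupp.single (E i) 1) (α, β)) =
      ∑ i : Fin s, (if (E i).2 = β then 1 else 0) := by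
  classical
  have happ : ∀ u, (∑ i : Fin s, Finsupp.single (E i) 1) u
      = ∑ i : Fin s, (if E i = u then 1 else 0) := by
    intro u
    rw [Finset.sum_apply']
    exact Finset.sum_congr rfl fun i _ => Finsupp.single_apply
  simp only [happ]
  rw [Finset.sum_comm]
  refine Finset.sum_congr rfl fun i _ => ?_
  obtain ⟨a, b⟩ := E i
  by_cases hb : b = β
  · simp [Prod.ext_iff, hb, Finset.sum_ite_eq]
  · simp [Prod.ext_iff, hb]

lemma count_le_two {s : ℕ} {X : Type*} [DecidableEq X] {f : Fin s → X × Fin 2}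
    (hf : Function.Injective f) (α : X) :
    (∑ i : Fin s, (if (f i).1 = α then 1 else 0)) ≤ 2 := by
  classical
  rw [← Finset.card_filter]
  calc (Finset.univ.filter fun i => (f i).1 = α).card
      ≤ (Finset.univ : Finset (Fin 2)).card := by
        refine Finset.card_le_card_of_injOn (fun i => (f i).2)
          (fun a _ => Finset.mem_univ _) ?_
        intro i hi j hj hij
        simp only [Finset.coe_filter, Set.mem_setOf_eq, Finset.mem_univ, true_and] at hi hj
        exact hf (Prod.ext (hi.trans hj.symm) hij)
    _ = 2 := by simp

lemma value_determined (I : Finset (Fin μ × Fin ν)) (rα : Fin μ → ℕ) (cβ : Fin ν → ℕ)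
    (hr2 : ∀ α, rα α ≤ 2) (hc2 : ∀ β, cβ β ≤ 2)
    (md : (Fin μ × Fin ν) →₀ ℕ)
    (hI : ∀ u, md u ≠ 0 → u ∈ I) (h1 : ∀ u ∈ I, 1 ≤ md u)
    (hrow : ∀ α, (∑ β, md (α, β)) = rα α) (hcol : ∀ β, (∑ α, md (α, β)) = cβ β)
    (α : Fin μ) (β : Fin ν) (hu : (α, β) ∈ I) :
    md (α, β) = if ∃ β', β' ≠ β ∧ (α, β') ∈ I then 1
      else if ∃ α', α' ≠ α ∧ (α', β) ∈ I then 1 else rα α := by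
  classical
  by_cases hb : ∃ β', β' ≠ β ∧ (α, β') ∈ I
  · rw [if_pos hb]
    obtain ⟨β', hne, hmem⟩ := hb
    have hle : md (α, β) + md (α, β') ≤ rα α := by
      rw [← hrow α]
      calc md (α, β) + md (α, β')
          = ∑ b ∈ ({β, β'} : Finset (Fin ν)), md (α, b) :=
            (Finset.sum_pair (f := fun b => md (α, b)) (Ne.symm hne)).symm
        _ ≤ ∑ b, md (α, b) := Finset.sum_le_sum_of_subset (Finset.subset_univ _)
    have g1 := h1 _ hu
    have g2 := h1 _ hmem
    have g3 := hr2 α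
    omega
  · rw [if_neg hb]
    by_cases ha : ∃ α', α' ≠ α ∧ (α', β) ∈ I
    · rw [if_pos ha]
      obtain ⟨α', hne, hmem⟩ := ha
      have hle : md (α, β) + md (α', β) ≤ cβ β := by
        rw [← hcol β]
        calc md (α, β) + md (α', β)
            = ∑ a ∈ ({α, α'} : Finset (Fin μ)), md (a, β) :=
              (Finset.sum_pair (f := fun a => md (a, β)) (Ne.symm hne)).symm
          _ ≤ ∑ a, md (a, β) := Finset.sum_le_sum_of_subset (Finset.subset_univ _)
      have g1 := h1 _ hu
      have g2 := h1 _ hmem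
      have g3 := hc2 β
      omega
    · rw [if_neg ha, ← hrow α]
      refine (Finset.sum_eq_single (f := fun b => md (α, b)) β (fun b _ hbne => ?_)
        (fun h => absurd (Finset.mem_univ β) h)).symm
      by_contra h0
      exact hb ⟨b, hbne, hI _ h0⟩

end PolyPart2

/-- The canonical substitution `Ã_I` of `A_I`: substitute `x_{αβ} = 1` for `αβ ∈ I`
and `x_{αβ} = 0` otherwise, yielding a matrix over `F`. -/
def canonSubst {F : Type*} [Field F] {μ ν : ℕ}
    (A : Fin μ → Fin ν → Matrix (Fin 2) (Fin 2) F) (I : Finset (Fin μ × Fin ν)) :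
    Matrix (Fin μ × Fin 2) (Fin ν × Fin 2) F :=
  Matrix.of fun p q => if (p.1, q.1) ∈ I then A p.1 q.1 p.2 q.2 else 0

section PolyPart3

open MvPolynomial

variable {F : Type*} [Field F] {μ ν : ℕ}

lemma genPartMat_eq_map (A : Fin μ → Fin ν → Matrix (Fin 2) (Fin 2) F)
    (J : Finset (Fin μ × Fin ν)) :
    genPartMat A J = (polyMat A J).map
      (algebraMap (MvPolynomial (Fin μ × Fin ν) F) (FractionRing (MvPolynomial (Fin μ × Fin ν) F))) := by
  refine Matrix.ext fun p q => ?_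
  by_cases h : (p.1, q.1) ∈ J <;>
    simp [genPartMat, polyMat, Matrix.map_apply, h]

lemma canonSubst_eq_map (A : Fin μ → Fin ν → Matrix (Fin 2) (Fin 2) F)
    (I : Finset (Fin μ × Fin ν)) :
    canonSubst A I = (polyMat A I).map
      (MvPolynomial.eval fun u => if u ∈ I then (1 : F) else 0) := by
  refine Matrix.ext fun p q => ?_
  by_cases h : (p.1, q.1) ∈ I <;>
    simp [canonSubst, polyMat, Matrix.map_apply, h]

lemma polyMat_map_erase (A : Fin μ → Fin ν → Matrix (Fin 2) (Fin 2) F)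
    (I : Finset (Fin μ × Fin ν)) (e : Fin μ × Fin ν) :
    (polyMat A I).map
      (MvPolynomial.aeval fun u => if u = e then 0 else MvPolynomial.X u)
        = polyMat A (I.erase e) := by
  refine Matrix.ext fun p q => ?_
  by_cases h : (p.1, q.1) ∈ I
  · by_cases h2 : (p.1, q.1) = e
    · have he : e ∈ I := h2 ▸ h
      simp only [polyMat, Matrix.map_apply, Matrix.of_apply, h2, if_pos h, if_pos he,
        Finset.mem_erase, _root_.map_mul, MvPolynomial.bind₁_C_right, MvPolynomial.bind₁_X_right,
        MvPolynomial.aeval_X, MvPolynomial.aeval_C]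
      simp [MvPolynomial.algebraMap_eq]
    · simp [polyMat, Matrix.map_apply, h, h2, Finset.mem_erase, MvPolynomial.aeval_X,
        MvPolynomial.bind₁_X_right, MvPolynomial.bind₁_C_right, _root_.map_mul,
        MvPolynomial.algebraMap_eq]
  · have h3 : (p.1, q.1) ∉ I.erase e := fun hh => h (Finset.mem_of_mem_erase hh)
    simp [polyMat, Matrix.map_apply, h, h3]

lemma support_pos_of_subst_zero {e : Fin μ × Fin ν} {D : MvPolynomial (Fin μ × Fin ν) F}
    (h : MvPolynomial.aeval
      (fun u => if u = e then 0 else MvPolynomial.X u) D = (0 : MvPolynomial (Fin μ × Fin ν) F))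
    {md : (Fin μ × Fin ν) →₀ ℕ} (hmd : md ∈ D.support) : md e ≠ 0 := by
  classical
  intro hme
  set sub : (Fin μ × Fin ν) → MvPolynomial (Fin μ × Fin ν) F :=
    fun u => if u = e then 0 else MvPolynomial.X u with hsub
  have hterm : ∀ m' ∈ D.support,
      MvPolynomial.aeval sub (MvPolynomial.monomial m' (MvPolynomial.coeff m' D))
      = if m' e = 0 then MvPolynomial.monomial m' (MvPolynomial.coeff m' D) else 0 := by
    intro m' _
    rw [MvPolynomial.aeval_monomial]
    by_cases h0 : m' e = 0
    · rw [if_pos h0]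
      have hp : (Finsupp.prod m' fun u k => sub u ^ k)
          = Finsupp.prod m' fun u k => (MvPolynomial.X u : MvPolynomial (Fin μ × Fin ν) F) ^ k := by
        refine Finset.prod_congr rfl fun u hu => ?_
        have hne : u ≠ e := fun he => (Finsupp.mem_support_iff.mp hu) (he ▸ h0)
        rw [hsub]
        simp only [if_neg hne]
      rw [hp, MvPolynomial.algebraMap_eq, ← MvPolynomial.monomial_eq]
    · rw [if_neg h0]
      have he : e ∈ m'.support := Finsupp.mem_support_iff.mpr h0
      have hp : (Finsupp.prod m' fun u k => sub u ^ k) = 0 := by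
        refine Finset.prod_eq_zero he ?_
        rw [hsub]
        simp only [if_pos rfl]
        exact zero_pow h0
      rw [hp, mul_zero]
  have hsum : MvPolynomial.aeval sub D
      = ∑ m' ∈ D.support, (if m' e = 0 then MvPolynomial.monomial m' (MvPolynomial.coeff m' D) else 0) := by
    conv_lhs => rw [MvPolynomial.as_sum D]
    rw [map_sum]
    exact Finset.sum_congr rfl hterm
  have h0' : (∑ m' ∈ D.support,
      (if m' e = 0 then MvPolynomial.monomial m' (MvPolynomial.coeff m' D) else 0)) = 0 := by
    rw [← hsum, h]
  have hc := congrArg (MvPolynomial.coeff md) h0'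
  rw [MvPolynomial.coeff_sum] at hc
  rw [Finset.sum_eq_single_of_mem md hmd ?_] at hc
  · rw [if_pos hme, MvPolynomial.coeff_monomial, if_pos rfl] at hc
    simp only [MvPolynomial.coeff_zero] at hc
    exact (MvPolynomial.mem_support_iff.mp hmd) hc
  · intro b hb hbne
    by_cases h0 : b e = 0
    · rw [if_pos h0, MvPolynomial.coeff_monomial, if_neg hbne]
    · rw [if_neg h0, MvPolynomial.coeff_zero]

end PolyPart3

lemma det_genPartMat_submatrix {F : Type*} [Field F] {μ ν : ℕ}
    (A : Fin μ → Fin ν → Matrix (Fin 2) (Fin 2) F) (J : Finset (Fin μ × Fin ν))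
    {s : ℕ} (f : Fin s → Fin μ × Fin 2) (g : Fin s → Fin ν × Fin 2) :
    ((genPartMat A J).submatrix f g).det =
      algebraMap (MvPolynomial (Fin μ × Fin ν) F) (FractionRing (MvPolynomial (Fin μ × Fin ν) F))
        (((polyMat A J).submatrix f g).det) := by
  rw [genPartMat_eq_map, Matrix.submatrix_map, ← RingHom.mapMatrix_apply, ← RingHom.map_det]

lemma det_canonSubst_submatrix {F : Type*} [Field F] {μ ν : ℕ}
    (A : Fin μ → Fin ν → Matrix (Fin 2) (Fin 2) F) (I : Finset (Fin μ × Fin ν))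
    {s : ℕ} (f : Fin s → Fin μ × Fin 2) (g : Fin s → Fin ν × Fin 2) :
    ((canonSubst A I).submatrix f g).det =
      MvPolynomial.eval (fun u => if u ∈ I then (1 : F) else 0)
        (((polyMat A I).submatrix f g).det) := by
  rw [canonSubst_eq_map, Matrix.submatrix_map, ← RingHom.mapMatrix_apply, ← RingHom.map_det]

/-- For a matching `I` of a `(2×2)`-type generic partitioned matrix `A` (removing any edge
of `I` strictly decreases the rank of `A_I`), the canonical substitution `Ã_I` satisfies
`rank Ã_I = rank A_I`. -/
theorem canonSubst_rank_eq {F : Type*} [Field F] {μ ν : ℕ}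
    (A : Fin μ → Fin ν → Matrix (Fin 2) (Fin 2) F) (I : Finset (Fin μ × Fin ν))
    (hIE : ∀ e ∈ I, A e.1 e.2 ≠ 0)
    (hmatch : ∀ e ∈ I, (genPartMat A (I.erase e)).rank < (genPartMat A I).rank) :
    (canonSubst A I).rank = (genPartMat A I).rank := by
  classical
  set R := MvPolynomial (Fin μ × Fin ν) F with hR
  set K := FractionRing R with hK
  have hinj : Function.Injective (algebraMap R K) := IsFractionRing.injective R K
  set φ0 : (Fin μ × Fin ν) → F := fun u => if u ∈ I then (1 : F) else 0 with hφ0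
  have hle : (canonSubst A I).rank ≤ (genPartMat A I).rank := by
    obtain ⟨f, g, hdet⟩ := exists_submatrix_det_ne_zero (canonSubst A I) rfl
    rw [det_canonSubst_submatrix A I f g] at hdet
    have hdetP : ((polyMat A I).submatrix f g).det ≠ 0 := fun h0 => hdet (by rw [h0, map_zero])
    have hdetK : ((genPartMat A I).submatrix f g).det ≠ 0 := by
      rw [det_genPartMat_submatrix]
      intro h0
      exact hdetP (hinj (by rw [h0, map_zero]))
    exact le_rank_of_det_ne_zero _ hdetK
  refine le_antisymm hle ?_
  obtain ⟨f, g, hdet⟩ := exists_submatrix_det_ne_zero (genPartMat A I) rfl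
  set D : MvPolynomial (Fin μ × Fin ν) F := ((polyMat A I).submatrix f g).det with hD
  have hdet' : ((genPartMat A I).submatrix f g).det = algebraMap R K D :=
    det_genPartMat_submatrix A I f g
  have hD0 : D ≠ 0 := by
    intro h0; apply hdet; rw [hdet', h0, map_zero]
  have hfinj : Function.Injective f := by
    intro i i' hii
    by_contra hne
    exact hdet (Matrix.det_zero_of_row_eq hne
      (funext fun j => by simp [Matrix.submatrix_apply, hii]))
  have hginj : Function.Injective g := by
    intro j j' hjj
    by_contra hne
    have hz : ((genPartMat A I).submatrix f g)ᵀ.det = 0 :=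
      Matrix.det_zero_of_row_eq hne
        (funext fun i => by simp [Matrix.transpose_apply, Matrix.submatrix_apply, hjj])
    exact hdet (by rw [← Matrix.det_transpose]; exact hz)
  have hP1 : ∀ e ∈ I, ∀ md ∈ D.support, md e ≠ 0 := by
    intro e he
    have hzK : ((genPartMat A (I.erase e)).submatrix f g).det = 0 :=
      det_submatrix_eq_zero_of_rank_lt (hmatch e he)
    have hzP : ((polyMat A (I.erase e)).submatrix f g).det = 0 := by
      apply hinj
      rw [← det_genPartMat_submatrix, hzK, map_zero]
    have hzD : MvPolynomial.aeval (R := F)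
        (fun u => if u = e then 0 else (MvPolynomial.X u : MvPolynomial (Fin μ × Fin ν) F)) D
          = 0 := by
      have h1 : (MvPolynomial.aeval (R := F)
          (fun u => if u = e then 0 else (MvPolynomial.X u : MvPolynomial (Fin μ × Fin ν) F))) D
          = (((polyMat A I).submatrix f g).map
              (MvPolynomial.aeval (R := F) fun u => if u = e then 0
                else (MvPolynomial.X u : MvPolynomial (Fin μ × Fin ν) F))).det := by
        rw [hD, AlgHom.map_det, AlgHom.mapMatrix_apply]
      rw [h1, ← Matrix.submatrix_map, polyMat_map_erase]
      exact hzP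
    exact fun md hmd => support_pos_of_subst_zero hzD hmd
  have hprops : ∀ md ∈ D.support,
      (∀ u, md u ≠ 0 → u ∈ I) ∧
      (∀ α, (∑ β, md (α, β)) = ∑ i, (if (f i).1 = α then 1 else 0)) ∧
      (∀ β, (∑ α, md (α, β)) = ∑ j, (if (g j).1 = β then 1 else 0)) := by
    intro md hmd
    obtain ⟨σ, hall, hrep⟩ := support_det_aux A I f g hmd
    refine ⟨?_, ?_, ?_⟩
    · intro u hu
      rw [hrep, Finset.sum_apply'] at hu
      obtain ⟨i, -, hi⟩ := Finset.exists_ne_zero_of_sum_ne_zero hu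
      have heq : ((f (σ i)).1, (g i).1) = u := by
        by_contra hne
        rw [Finsupp.single_apply, if_neg hne] at hi
        exact hi rfl
      exact heq ▸ hall i
    · intro α
      rw [hrep, sum_single_fst]
      exact Equiv.sum_comp σ (fun i => if (f i).1 = α then (1 : ℕ) else 0)
    · intro β
      rw [hrep, sum_single_snd]
  have huniq : ∀ m1 ∈ D.support, ∀ m2 ∈ D.support, m1 = m2 := by
    intro m1 h1 m2 h2
    obtain ⟨hI1, hr1, hc1⟩ := hprops m1 h1
    obtain ⟨hI2, hr2, hc2⟩ := hprops m2 h2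
    have h11 : ∀ u ∈ I, 1 ≤ m1 u := fun u hu => Nat.one_le_iff_ne_zero.mpr (hP1 u hu m1 h1)
    have h21 : ∀ u ∈ I, 1 ≤ m2 u := fun u hu => Nat.one_le_iff_ne_zero.mpr (hP1 u hu m2 h2)
    apply Finsupp.ext
    rintro ⟨α, β⟩
    by_cases hu : (α, β) ∈ I
    · rw [value_determined I _ _ (fun a => count_le_two hfinj a) (fun b => count_le_two hginj b)
        m1 hI1 h11 hr1 hc1 α β hu,
        value_determined I _ _ (fun a => count_le_two hfinj a) (fun b => count_le_two hginj b)
        m2 hI2 h21 hr2 hc2 α β hu]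
    · have z1 : m1 (α, β) = 0 := by by_contra h0; exact hu (hI1 _ h0)
      have z2 : m2 (α, β) = 0 := by by_contra h0; exact hu (hI2 _ h0)
      rw [z1, z2]
  obtain ⟨md0, hmd0⟩ := Finset.nonempty_iff_ne_empty.mpr
    (fun hemp => hD0 (MvPolynomial.support_eq_empty.mp hemp))
  have hsupp : D.support = {md0} :=
    Finset.eq_singleton_iff_unique_mem.mpr ⟨hmd0, fun x hx => huniq x hx md0 hmd0⟩
  have hI0 := (hprops md0 hmd0).1
  have heval : MvPolynomial.eval φ0 D ≠ 0 := by
    have hDm : D = MvPolynomial.monomial md0 (MvPolynomial.coeff md0 D) := by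
      conv_lhs => rw [MvPolynomial.as_sum D]
      rw [hsupp, Finset.sum_singleton]
    rw [hDm, MvPolynomial.eval_monomial]
    have hprod : (Finsupp.prod md0 fun u k => φ0 u ^ k) = 1 := by
      apply Finset.prod_eq_one
      intro u hu
      have huI : u ∈ I := hI0 u (Finsupp.mem_support_iff.mp hu)
      rw [hφ0]
      simp [huI]
    rw [hprod, mul_one]
    exact MvPolynomial.mem_support_iff.mp hmd0
  have hdetF : ((canonSubst A I).submatrix f g).det ≠ 0 := by
    rw [det_canonSubst_submatrix A I f g]
    exact heval
  exact le_rank_of_det_ne_zero _ hdetF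
end

section
/- Let G be a finite bipartite graph and I an edge subset with maximum degree 2 whose components are paths and cycles, properly 2-edge-colored with +/−. Suppose I is equipped with a valid labeling: for each vertex two distinct 1-dimensional subspaces (U_α^+, U_α^− ⊆ F² for left vertices, V_β^+, V_β^− ⊆ F² for right vertices) such that for every edge αβ ∈ I: A_{αβ}(U_α^+, V_β^−) = A_{αβ}(U_α^−, V_β^+) = {0}, and if αβ is a rank-1 +-edge then (ker_L A_{αβ}, ker_R A_{αβ}) = (U_α^+, V_β^+) (and symmetrically (U_α^−, V_β^−) for rank-1 −-edges). Then for every rank-2 edge αβ ∈ I, the 2×2 matrices S_α with rows spanning U_α^+, U_α^− and T_β with columns spanning V_β^+, V_β^− are nonsingular and S_α A_{αβ} T_β is a diagonal 2×2 matrix with both diagonal entries nonzero. -/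
open Matrix

/-- Two vectors in `F²` with the second not a scalar multiple of the first (and first nonzero)
form a matrix with nonzero determinant. -/
lemma det_ne_zero_of_not_smul {F : Type*} [Field F] {u w : Fin 2 → F}
    (hu : u ≠ 0) (h : ∀ k : F, w ≠ k • u) :
    (Matrix.of ![u, w]).det ≠ 0 := by
  intro hdet
  rw [Matrix.det_fin_two] at hdet
  simp only [Matrix.of_apply, Matrix.cons_val', Matrix.cons_val_zero, Matrix.cons_val_one,
    Matrix.head_cons, Matrix.empty_val', Matrix.cons_val_fin_one, Matrix.head_fin_const] at hdet
  -- hdet : u 0 * w 1 - u 1 * w 0 = 0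
  rcases eq_or_ne (u 0) 0 with h0 | h0
  · rcases eq_or_ne (u 1) 0 with h1 | h1
    · exact hu (funext fun i => by fin_cases i <;> assumption)
    · have hd : u 1 * w 0 = 0 := by linear_combination w 1 * h0 - hdet
      have hw0 : w 0 = 0 := (mul_eq_zero.mp hd).resolve_left h1
      apply h (w 1 / u 1)
      funext i
      fin_cases i
      · simp [hw0, h0]
      · simp; field_simp
  · apply h (w 0 / u 0)
    funext i
    fin_cases i
    · simp; field_simp
    · simp
      field_simp
      linear_combination hdet

lemma vec_eq_zero_of_dot {F : Type*} [Field F] {p q w : Fin 2 → F}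
    (hdet : (Matrix.of ![p, q]).det ≠ 0) (hp : w ⬝ᵥ p = 0) (hq : w ⬝ᵥ q = 0) : w = 0 := by
  apply Matrix.eq_zero_of_mulVec_eq_zero hdet
  funext i
  fin_cases i
  · simpa [Matrix.mulVec, dotProduct, mul_comm] using hp
  · simpa [Matrix.mulVec, dotProduct, mul_comm] using hq

lemma rank_lt_of_vecMul_eq_zero {F : Type*} [Field F] {M : Matrix (Fin 2) (Fin 2) F}
    {w : Fin 2 → F} (hw : w ≠ 0) (h : w ᵥ* M = 0) : M.rank ≠ 2 := by
  have hdet : M.det = 0 := Matrix.exists_vecMul_eq_zero_iff.mp ⟨w, hw, h⟩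
  intro hrk
  obtain ⟨v, hv, hMv⟩ := Matrix.exists_mulVec_eq_zero_iff.mpr hdet
  have hker : 0 < Module.finrank F (LinearMap.ker M.mulVecLin) := by
    rw [Module.finrank_pos_iff]
    exact ⟨⟨⟨v, by simpa [Matrix.mulVecLin] using hMv⟩, 0, by simpa using hv⟩⟩
  have hsum := LinearMap.finrank_range_add_finrank_ker M.mulVecLin
  rw [show Module.finrank F (LinearMap.range M.mulVecLin) = M.rank from rfl, hrk,
    Module.finrank_fin_fun] at hsum
  omega

lemma entry_eq {F : Type*} [Field F] (u w p q : Fin 2 → F) (M : Matrix (Fin 2) (Fin 2) F)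
    (i j : Fin 2) :
    (Matrix.of ![u, w] * M * (Matrix.of ![p, q])ᵀ) i j = ![u, w] i ⬝ᵥ M.mulVec (![p, q] j) := by
  fin_cases i <;> fin_cases j <;>
    · simp [Matrix.mul_apply, Matrix.mulVec, Matrix.vecMul, Matrix.vecHead, Matrix.vecTail,
        dotProduct, Fin.sum_univ_two, Matrix.transpose_apply]
      ring

/-- Let `I` be an edge set of a finite bipartite graph, properly 2-edge-colored by
`col` (`true` = `+`, `false` = `−`), whose blocks `A_{αβ}` have rank 1 or 2, equipped with
a valid labeling: nonzero vectors `u_α^±` and `v_β^±` spanning pairwise distinct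
1-dimensional subspaces, such that for every edge `αβ ∈ I` the orthogonality
`A_{αβ}(U_α^+, V_β^−) = A_{αβ}(U_α^−, V_β^+) = {0}` holds and for rank-1 `+`-edges
(resp. `−`-edges) the labels `u_α^+, v_β^+` (resp. `u_α^−, v_β^−`) span the left and right
kernels of `A_{αβ}`. Then for every rank-2 edge `αβ ∈ I` the matrix `S_α` with rows
`u_α^+, u_α^−` and the matrix `T_β` with columns `v_β^+, v_β^−` are nonsingular and
`S_α A_{αβ} T_β` is diagonal with both diagonal entries nonzero. -/
theorem validLabeling_rank2_diagonalization {F : Type*} [Field F] {μ ν : ℕ}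
    (A : Fin μ → Fin ν → Matrix (Fin 2) (Fin 2) F)
    (I : Finset (Fin μ × Fin ν)) (col : Fin μ × Fin ν → Bool)
    (hcolor : ∀ e ∈ I, ∀ f ∈ I, e ≠ f → (e.1 = f.1 ∨ e.2 = f.2) → col e ≠ col f)
    (up um : Fin μ → Fin 2 → F) (vp vm : Fin ν → Fin 2 → F)
    (hup : ∀ α, up α ≠ 0) (hum : ∀ α, um α ≠ 0)
    (hvp : ∀ β, vp β ≠ 0) (hvm : ∀ β, vm β ≠ 0)
    (hU : ∀ α, ∀ k : F, um α ≠ k • up α)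
    (hV : ∀ β, ∀ k : F, vm β ≠ k • vp β)
    (hrk : ∀ e ∈ I, (A e.1 e.2).rank = 1 ∨ (A e.1 e.2).rank = 2)
    (horth : ∀ e ∈ I, up e.1 ⬝ᵥ (A e.1 e.2).mulVec (vm e.2) = 0 ∧
      um e.1 ⬝ᵥ (A e.1 e.2).mulVec (vp e.2) = 0)
    (hr1p : ∀ e ∈ I, (A e.1 e.2).rank = 1 → col e = true →
      Matrix.vecMul (up e.1) (A e.1 e.2) = 0 ∧ (A e.1 e.2).mulVec (vp e.2) = 0)
    (hr1m : ∀ e ∈ I, (A e.1 e.2).rank = 1 → col e = false →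
      Matrix.vecMul (um e.1) (A e.1 e.2) = 0 ∧ (A e.1 e.2).mulVec (vm e.2) = 0) :
    ∀ e ∈ I, (A e.1 e.2).rank = 2 →
      (Matrix.of ![up e.1, um e.1]).det ≠ 0 ∧
      ((Matrix.of ![vp e.2, vm e.2])ᵀ).det ≠ 0 ∧
      (Matrix.of ![up e.1, um e.1] * A e.1 e.2 * (Matrix.of ![vp e.2, vm e.2])ᵀ) 0 1 = 0 ∧
      (Matrix.of ![up e.1, um e.1] * A e.1 e.2 * (Matrix.of ![vp e.2, vm e.2])ᵀ) 1 0 = 0 ∧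
      (Matrix.of ![up e.1, um e.1] * A e.1 e.2 * (Matrix.of ![vp e.2, vm e.2])ᵀ) 0 0 ≠ 0 ∧
      (Matrix.of ![up e.1, um e.1] * A e.1 e.2 * (Matrix.of ![vp e.2, vm e.2])ᵀ) 1 1 ≠ 0 := by
  intro e he hrk2
  obtain ⟨ho1, ho2⟩ := horth e he
  have hdetS := det_ne_zero_of_not_smul (hup e.1) (hU e.1)
  have hdetT := det_ne_zero_of_not_smul (hvp e.2) (hV e.2)
  refine ⟨hdetS, by rwa [Matrix.det_transpose], ?_, ?_, ?_, ?_⟩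
  · rw [entry_eq]; simpa using ho1
  · rw [entry_eq]; simpa using ho2
  · rw [entry_eq]
    simp only [Matrix.cons_val_zero]
    intro h00
    have hw : (up e.1) ᵥ* (A e.1 e.2) = 0 := by
      apply vec_eq_zero_of_dot hdetT
      · rw [← Matrix.dotProduct_mulVec]; exact h00
      · rw [← Matrix.dotProduct_mulVec]; exact ho1
    exact rank_lt_of_vecMul_eq_zero (hup e.1) hw hrk2
  · rw [entry_eq]
    simp only [Matrix.cons_val_one, Matrix.head_cons]
    intro h11
    have hw : (um e.1) ᵥ* (A e.1 e.2) = 0 := by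
      apply vec_eq_zero_of_dot hdetT
      · rw [← Matrix.dotProduct_mulVec]; exact ho2
      · rw [← Matrix.dotProduct_mulVec]; exact h11
    exact rank_lt_of_vecMul_eq_zero (hum e.1) hw hrk2
end
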